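/- arXiv:0706.2348 — 2 statements merged into one kernel-verified Lean document; each statement's English description precedes it below -/
import Mathlib

section
/- Let 0 < R₁ < R₂ and let φ be a function analytic on the disk {w ∈ ℂ : |w| < R₂}, continuous on {|w| ≤ R₂}, with a zero of order two at w = 0. Then max_{|w| ≤ R₁} |φ′(w)| ≤ (1 − R₁/R₂)^{−1} · max_{0<|w| ≤ R₂} |φ(w)|/|w|. -/
/-!
Since `φ 0 = 0`, write `φ w = w · g w` with `g = dslope φ 0`, holomorphic on the disc.
The hypothesis bounds `‖g‖` by `M` on `|w| ≤ R₂` (at `0` because `g 0 = φ′ 0 = 0`), so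
the Cauchy estimate on the disc of radius `R₂ - |w|` around `w` gives
`‖g′ w‖ ≤ M / (R₂ - |w|)`. Hence
`‖φ′ w‖ = ‖g w + w g′ w‖ ≤ M + |w| M / (R₂ - |w|) = (1 - |w| / R₂)⁻¹ M`,
which increases with `|w|`.
-/

open Complex Set Metric

section DSlope

variable {𝕜 E : Type*} [NontriviallyNormedField 𝕜] [NormedAddCommGroup E] [NormedSpace 𝕜 E]

theorem deriv_eq_dslope_add_sub_smul_deriv_dslope {f : 𝕜 → E} {c w : 𝕜}
    (h : DifferentiableAt 𝕜 (dslope f c) w) :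
    deriv f w = dslope f c w + (w - c) • deriv (dslope f c) w := by
  have hf : (fun z => f c + (z - c) • dslope f c z) = f := by
    funext z
    rw [sub_smul_dslope, add_sub_cancel]
  have key : HasDerivAt (fun z => f c + (z - c) • dslope f c z)
      ((w - c) • deriv (dslope f c) w + (1 : 𝕜) • dslope f c w) w :=
    (((hasDerivAt_id w).sub_const c).fun_smul h.hasDerivAt).const_add (f c)
  rw [hf, one_smul, add_comm] at key
  exact key.deriv

theorem norm_dslope_le_of_norm_le_mul_norm_sub {f : 𝕜 → E} {c z : 𝕜} {M : ℝ}
    (hfc : f c = 0) (hf'c : deriv f c = 0) (hM : 0 ≤ M)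
    (hbound : z ≠ c → ‖f z‖ ≤ M * ‖z - c‖) : ‖dslope f c z‖ ≤ M := by
  rcases eq_or_ne z c with rfl | hzc
  · rwa [dslope_same, hf'c, norm_zero]
  · have hpos : 0 < ‖z - c‖ := norm_pos_iff.2 (sub_ne_zero.2 hzc)
    rw [dslope_of_ne _ hzc, slope_def_module, hfc, sub_zero, norm_smul, norm_inv,
      inv_mul_le_iff₀ hpos, mul_comm]
    exact hbound hzc

end DSlope

section Cauchy

variable {E : Type*} [NormedAddCommGroup E] [NormedSpace ℂ E]

theorem norm_deriv_le_of_norm_le_on_closedBall {f : ℂ → E} {c w : ℂ} {R M : ℝ}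
    (hf : DifferentiableOn ℂ f (ball c R)) (hfc : ContinuousOn f (closedBall c R))
    (hM : ∀ z ∈ closedBall c R, ‖f z‖ ≤ M) (hw : w ∈ ball c R) :
    ‖deriv f w‖ ≤ M / (R - dist w c) := by
  have hr : 0 < R - dist w c := sub_pos.2 (mem_ball.1 hw)
  have hball : ball w (R - dist w c) ⊆ ball c R := ball_subset_ball' (by simp)
  have hclosedBall : closedBall w (R - dist w c) ⊆ closedBall c R :=
    closedBall_subset_closedBall' (by simp)
  refine norm_deriv_le_of_forall_mem_sphere_norm_le hr ⟨hf.mono hball, ?_⟩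
    fun z hz => hM z (hclosedBall (sphere_subset_closedBall hz))
  rw [closure_ball _ hr.ne']
  exact hfc.mono hclosedBall

theorem norm_deriv_le_of_norm_le_mul_norm [CompleteSpace E] {φ : ℂ → E} {R M : ℝ}
    (hφ : DifferentiableOn ℂ φ (ball 0 R)) (hφc : ContinuousOn φ (closedBall 0 R))
    (hφ0 : φ 0 = 0) (hφ'0 : deriv φ 0 = 0) (hM0 : 0 ≤ M)
    (hM : ∀ z : ℂ, z ≠ 0 → ‖z‖ ≤ R → ‖φ z‖ ≤ M * ‖z‖)
    {w : ℂ} (hw : ‖w‖ < R) :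
    ‖deriv φ w‖ ≤ (1 - ‖w‖ / R)⁻¹ * M := by
  have hR : 0 < R := (norm_nonneg w).trans_lt hw
  have hwR : 0 < R - ‖w‖ := sub_pos.2 hw
  set g := dslope φ 0
  have hg : DifferentiableOn ℂ g (ball 0 R) :=
    (differentiableOn_dslope (ball_mem_nhds 0 hR)).2 hφ
  have hgc : ContinuousOn g (closedBall 0 R) :=
    (continuousOn_dslope (closedBall_mem_nhds 0 hR)).2
      ⟨hφc, hφ.differentiableAt (ball_mem_nhds 0 hR)⟩
  have hgM : ∀ z ∈ closedBall (0 : ℂ) R, ‖g z‖ ≤ M := fun z hz =>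
    norm_dslope_le_of_norm_le_mul_norm_sub hφ0 hφ'0 hM0 fun hz0 => by
      simpa using hM z hz0 (mem_closedBall_zero_iff.1 hz)
  have hwball : w ∈ ball (0 : ℂ) R := mem_ball_zero_iff.2 hw
  have hg' : ‖deriv g w‖ ≤ M / (R - ‖w‖) := by
    simpa using norm_deriv_le_of_norm_le_on_closedBall hg hgc hgM hwball
  rw [deriv_eq_dslope_add_sub_smul_deriv_dslope
    (hg.differentiableAt (isOpen_ball.mem_nhds hwball)), sub_zero]
  calc ‖g w + w • deriv g w‖ ≤ M + ‖w‖ * (M / (R - ‖w‖)) := by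
        refine (norm_add_le _ _).trans (add_le_add (hgM w (ball_subset_closedBall hwball)) ?_)
        rw [norm_smul]
        exact mul_le_mul_of_nonneg_left hg' (norm_nonneg w)
    _ = (1 - ‖w‖ / R)⁻¹ * M := by
        field_simp
        ring

end Cauchy

theorem stmt10_general (R₁ R₂ : ℝ) (h12 : R₁ < R₂)
    (φ : ℂ → ℂ)
    (hφ : DifferentiableOn ℂ φ (ball (0 : ℂ) R₂))
    (hφc : ContinuousOn φ (closedBall (0 : ℂ) R₂))
    (hφ0 : φ 0 = 0) (hφ'0 : deriv φ 0 = 0) :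
    ∀ M : ℝ, (∀ z : ℂ, z ≠ 0 → ‖z‖ ≤ R₂ → ‖φ z‖ ≤ M * ‖z‖) →
      ∀ w : ℂ, ‖w‖ ≤ R₁ → ‖deriv φ w‖ ≤ (1 - R₁ / R₂)⁻¹ * M := by
  intro M hM w hw
  have hR₂ : 0 < R₂ := (norm_nonneg w).trans_lt (hw.trans_lt h12)
  have hM0 : 0 ≤ M := by
    have := hM R₂ (ofReal_ne_zero.2 hR₂.ne') (by simp [abs_of_pos hR₂])
    rw [norm_real, Real.norm_of_nonneg hR₂.le] at this
    exact nonneg_of_mul_nonneg_left ((norm_nonneg _).trans this) hR₂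
  calc ‖deriv φ w‖ ≤ (1 - ‖w‖ / R₂)⁻¹ * M :=
        norm_deriv_le_of_norm_le_mul_norm hφ hφc hφ0 hφ'0 hM0 hM (hw.trans_lt h12)
    _ ≤ (1 - R₁ / R₂)⁻¹ * M := by
        gcongr
        exact sub_pos.2 ((div_lt_one hR₂).2 h12)

/-- Cauchy-type estimate: if `0 < R₁ < R₂` and `φ` is analytic on `|w| < R₂`,
continuous on `|w| ≤ R₂`, with a zero of order two at `w = 0` (i.e. `φ(0) = φ′(0) = 0`), then
`max_{|w|≤R₁} |φ′(w)| ≤ (1 - R₁/R₂)⁻¹ · max_{0<|w|≤R₂} |φ(w)|/|w|` (stated for an arbitrary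
upper bound `M` of `|φ(w)|/|w|` on `0 < |w| ≤ R₂`). -/
theorem stmt10 (R₁ R₂ : ℝ) (h1 : 0 < R₁) (h12 : R₁ < R₂)
    (φ : ℂ → ℂ)
    (hφ : DifferentiableOn ℂ φ (ball (0 : ℂ) R₂))
    (hφc : ContinuousOn φ (closedBall (0 : ℂ) R₂))
    (hφ0 : φ 0 = 0) (hφ'0 : deriv φ 0 = 0) :
    ∀ M : ℝ, (∀ z : ℂ, z ≠ 0 → ‖z‖ ≤ R₂ → ‖φ z‖ ≤ M * ‖z‖) →
      ∀ w : ℂ, ‖w‖ ≤ R₁ → ‖deriv φ w‖ ≤ (1 - R₁ / R₂)⁻¹ * M :=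
  stmt10_general R₁ R₂ h12 φ hφ hφc hφ0 hφ'0
end

section
/- Suppose f ∈ Π has a zero of order p ≥ 2 at w = 0, i.e. f_n ≡ 0 for all n < p. Then Φ[f](w) = Σ_{n≥p} Φ_n[f_n] wⁿ and h(x,w) = Σ_{n≥p} J_n[f_n](x) wⁿ have zeros of order ≥ p at w = 0, and—under the hypotheses guaranteeing that the compositions are defined on Δ_δ—the remainder R₀[f](x,w) = f(x, w+h(x,w)) − f(x,w) − Φ[f](w+h(x,w)) + Φ[f](w), and hence also R[f] = (1 + ∂_w h)^{−1} R₀[f], has a zero of order ≥ 2p−1 at w = 0. -/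
/-
Everything is read off from orders of vanishing at `w = 0`; for analytic functions, order `≥ q`
means both that the first `q` derivatives vanish and that the function is `O(w^q)`.
A series `∑ cₙ wⁿ` with `cₙ = 0` for `n < p` has order `≥ p` (with zero radius of convergence it
vanishes identically), which gives the claims on `Φ[f]` and `h`; here `J_n[0] = 0`, and `hJ n`,
being continuous and zero off the real axis, vanishes on the whole disk.
For `F = f(x,·) - Φ[f] = wᵖ u` and `ν = w + h`,
`R₀[f] = F(ν) - F(w) = (νᵖ - wᵖ) u(ν) + wᵖ (u(ν) - u(w))`, where `νᵖ - wᵖ = O(wᵖ⁻¹ h)` and, `u`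
being locally Lipschitz, `u(ν) - u(w) = O(h)`; so `R₀[f] = O(w^(2p-1))`. Multiplying by
`(1 + ∂_w h)⁻¹`, analytic since `∂_w h(0) = 0`, does not lower the order.
-/

open Complex Set Metric

/-- The Beta function `B(p,q) = Γ(p)Γ(q)/Γ(p+q)`. -/
noncomputable def cBeta (p q : ℂ) : ℂ := Complex.Gamma p * Complex.Gamma q / Complex.Gamma (p + q)

/-- The functional `Φ_{ν+1}[F] = (2^{1-ν(a+b)}/B(νa,νb)) ∫_{-1}^1 (1-t)^{νa-1}(1+t)^{νb-1} F(t) dt`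
(principal complex powers). -/
noncomputable def PhiOp (a b ν : ℂ) (F : ℂ → ℂ) : ℂ :=
  (2 : ℂ) ^ (1 - ν * (a + b)) / cBeta (ν * a) (ν * b) *
    ∫ t in (-1 : ℝ)..1, (1 - (t : ℂ)) ^ (ν * a - 1) * (1 + (t : ℂ)) ^ (ν * b - 1) * F (t : ℂ)

/-- The operator `J_{ν+1}[F](z) = (1-z)^{-νa}(1+z)^{-νb} ∫_{-1}^z
(1-t)^{νa-1}(1+t)^{νb-1}(F(t)-Φ_{ν+1}[F]) dt`, the integral being taken along the straight
segment from `-1` to `z`, parametrized by `t = -1 + s(z+1)`, `s ∈ [0,1]`. -/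
noncomputable def JOp (a b ν : ℂ) (F : ℂ → ℂ) (z : ℂ) : ℂ :=
  (1 - z) ^ (-(ν * a)) * (1 + z) ^ (-(ν * b)) *
    ∫ s in (0 : ℝ)..1, (z + 1) *
      ((1 - (-1 + (s : ℂ) * (z + 1))) ^ (ν * a - 1) * (1 + (-1 + (s : ℂ) * (z + 1))) ^ (ν * b - 1) *
        (F (-1 + (s : ℂ) * (z + 1)) - PhiOp a b ν F))

/-- Points off the two branch cuts `(-∞,-1]` and `[1,∞)` of the principal powers. -/
def OffCut (z : ℂ) : Prop := z.im ≠ 0 ∨ (-1 < z.re ∧ z.re < 1)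

/-- Hypotheses defining the space `Π` on the polydisk `Δ_{ρ,R}`: `f` is analytic on
`Δ_{ρ,R} = {(x,w) : |x-c| < ρ, |w| < R}`, continuous on its closure, has a zero of order two
at `w = 0`, and `fc n` are its Taylor coefficients in `w`: `f(x,w) = Σ_{n≥2} fc n (x) wⁿ`. -/
def PiSetup (c : ℂ) (ρ R : ℝ) (f : ℂ → ℂ → ℂ) (fc : ℕ → ℂ → ℂ) : Prop :=
  DifferentiableOn ℂ (fun p : ℂ × ℂ => f p.1 p.2) (Metric.ball c ρ ×ˢ Metric.ball (0 : ℂ) R) ∧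
  ContinuousOn (fun p : ℂ × ℂ => f p.1 p.2)
    (Metric.closedBall c ρ ×ˢ Metric.closedBall (0 : ℂ) R) ∧
  fc 0 = 0 ∧ fc 1 = 0 ∧
  ∀ x ∈ Metric.ball c ρ, ∀ w ∈ Metric.ball (0 : ℂ) R,
    HasSum (fun n => fc n x * w ^ n) (f x w)

/-- `hJ n` is the analytic extension of `J_n[f_n] = JOp a b (n-1) (fc n)` to the disk
`D_ρ` (they agree off the branch cuts, where the defining formula is analytic). -/
def JExt (a b c : ℂ) (ρ : ℝ) (fc : ℕ → ℂ → ℂ) (hJ : ℕ → ℂ → ℂ) : Prop :=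
  (∀ n < 2, hJ n = 0) ∧
  ∀ n, 2 ≤ n → DifferentiableOn ℂ (hJ n) (Metric.ball c ρ) ∧
    ∀ z ∈ Metric.ball c ρ, OffCut z → hJ n z = JOp a b ((n : ℂ) - 1) (fc n) z

/-- `h(x,w) = Σ_{n≥2} J_n[f_n](x) wⁿ` (via the extensions `hJ`). -/
noncomputable def hFun (hJ : ℕ → ℂ → ℂ) (x w : ℂ) : ℂ := ∑' n : ℕ, hJ n x * w ^ n

/-- `Φ[f](w) = Σ_{n≥2} Φ_n[f_n] wⁿ`. -/
noncomputable def PhiFun (a b : ℂ) (fc : ℕ → ℂ → ℂ) (w : ℂ) : ℂ :=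
  ∑' n : ℕ, PhiOp a b ((n : ℂ) - 1) (fc n) * w ^ n

open Filter Topology Asymptotics FormalMultilinearSeries

section AnalyticOrder

variable {𝕜 E : Type*} [NontriviallyNormedField 𝕜] [NormedAddCommGroup E] [NormedSpace 𝕜 E]
  {f : 𝕜 → E} {z₀ : 𝕜}

theorem AnalyticAt.natCast_le_analyticOrderAt_iff_isBigO (hf : AnalyticAt 𝕜 f z₀) {n : ℕ} :
    n ≤ analyticOrderAt f z₀ ↔ f =O[𝓝 z₀] fun z => (z - z₀) ^ n := by
  constructor
  · rw [natCast_le_analyticOrderAt hf]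
    rintro ⟨g, hg, hfg⟩
    have hbig := (isBigO_refl (fun z => (z - z₀) ^ n) (𝓝 z₀)).smul
      (hg.continuousAt.tendsto.isBigO_one 𝕜)
    simp only [smul_eq_mul, mul_one] at hbig
    exact hbig.congr' (hfg.mono fun _ h => h.symm) EventuallyEq.rfl
  · intro hO
    by_contra! hlt
    obtain ⟨m, hm⟩ := ENat.ne_top_iff_exists.mp hlt.ne_top
    obtain ⟨g, hg, hg0, hfg⟩ := hf.analyticOrderAt_eq_natCast.mp hm.symm
    have hmn : m < n := by exact_mod_cast hm ▸ hlt
    have hgO : g =O[𝓝[≠] z₀] fun z => (z - z₀) ^ (n - m) := by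
      refine ((isBigO_refl (fun z => ((z - z₀) ^ m)⁻¹) _).smul
        (hO.mono nhdsWithin_le_nhds)).congr' ?_ ?_
      · filter_upwards [hfg.filter_mono nhdsWithin_le_nhds, self_mem_nhdsWithin] with z hz hz₀
        rw [hz, smul_smul, inv_mul_cancel₀ (pow_ne_zero _ (sub_ne_zero.mpr hz₀)), one_smul]
      · filter_upwards [self_mem_nhdsWithin] with z hz₀
        rw [smul_eq_mul, pow_sub₀ _ (sub_ne_zero.mpr hz₀) hmn.le, mul_comm]
    have hlim : Tendsto (fun z => (z - z₀) ^ (n - m)) (𝓝[≠] z₀) (𝓝 0) := by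
      have : Tendsto (fun z => (z - z₀) ^ (n - m)) (𝓝 z₀) (𝓝 ((z₀ - z₀) ^ (n - m))) :=
        ((continuous_id.sub continuous_const).pow _).tendsto z₀
      rw [sub_self, zero_pow (Nat.sub_ne_zero_of_lt hmn)] at this
      exact this.mono_left nhdsWithin_le_nhds
    exact hg0 (tendsto_nhds_unique (hg.continuousAt.tendsto.mono_left nhdsWithin_le_nhds)
      (hgO.trans_tendsto hlim))

theorem analyticOrderAt_ne_zero_of_natCast_le {n : ℕ} (hn : 0 < n)
    (h : n ≤ analyticOrderAt f z₀) : analyticOrderAt f z₀ ≠ 0 :=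
  (lt_of_lt_of_le (by exact_mod_cast hn) h).ne'

theorem iteratedDeriv_eq_zero_of_natCast_le_analyticOrderAt [CompleteSpace E] [CharZero 𝕜]
    {n : ℕ} (h : n ≤ analyticOrderAt f z₀) : ∀ i < n, iteratedDeriv i f z₀ = 0 := by
  rcases n.eq_zero_or_pos with rfl | hn
  · simp
  have hf := (analyticOrderAt_ne_zero.mp (analyticOrderAt_ne_zero_of_natCast_le hn h)).1
  exact (natCast_le_analyticOrderAt_iff_iteratedDeriv_eq_zero hf).mp h

theorem analyticOrderAt_le_analyticOrderAt_mul {f g : 𝕜 → 𝕜} (hg : AnalyticAt 𝕜 g z₀) :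
    analyticOrderAt f z₀ ≤ analyticOrderAt (g * f) z₀ := by
  by_cases hf : AnalyticAt 𝕜 f z₀
  · rw [analyticOrderAt_mul hg hf]
    exact le_add_self
  · simp [analyticOrderAt_of_not_analyticAt hf]

end AnalyticOrder

theorem isBigO_pow_pow_of_le {𝕜 : Type*} [NormedDivisionRing 𝕜] {m n : ℕ} (h : m ≤ n) :
    (fun x : 𝕜 => x ^ n) =O[𝓝 0] fun x => x ^ m := by
  rcases h.eq_or_lt with rfl | h
  · exact isBigO_refl _ _
  · exact (isLittleO_pow_pow h).isBigO

section PowerSeries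

variable {𝕜 : Type*} [NontriviallyNormedField 𝕜] {c : ℕ → 𝕜}

theorem le_radius_ofScalars_of_summable {w : 𝕜} (h : Summable fun n => c n * w ^ n) :
    (‖w‖₊ : ENNReal) ≤ (ofScalars 𝕜 c).radius := by
  refine (ofScalars 𝕜 c).le_radius_of_tendsto (l := 0) ?_
  simpa [ofScalars_norm, norm_mul, norm_pow] using h.tendsto_atTop_zero.norm

theorem hasFPowerSeriesAt_tsum_mul_pow [CompleteSpace 𝕜] (h : 0 < (ofScalars 𝕜 c).radius) :
    HasFPowerSeriesAt (fun w => ∑' n, c n * w ^ n) (ofScalars 𝕜 c) 0 := by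
  have := ((ofScalars 𝕜 c).hasFPowerSeriesOnBall h).hasFPowerSeriesAt
  rwa [← ofScalarsSum, ofScalarsSum_eq_tsum] at this

theorem HasFPowerSeriesAt.iteratedDeriv_eq_factorial_mul [CompleteSpace 𝕜] [CharZero 𝕜]
    {f : 𝕜 → 𝕜} {z₀ : 𝕜} (hf : HasFPowerSeriesAt f (ofScalars 𝕜 c) z₀) (n : ℕ) :
    iteratedDeriv n f z₀ = n.factorial * c n := by
  have := congrFun ((ofScalars_series_eq_iff 𝕜 _ _).mp
    (hf.analyticAt.hasFPowerSeriesAt.eq_formalMultilinearSeries hf)) n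
  rw [← this, mul_div_cancel₀ _ (by exact_mod_cast n.factorial_ne_zero)]

theorem natCast_le_analyticOrderAt_tsum_mul_pow [CompleteSpace 𝕜] [CharZero 𝕜] {q : ℕ}
    (hq : 0 < q) (hc : ∀ n < q, c n = 0) :
    q ≤ analyticOrderAt (fun w => ∑' n, c n * w ^ n) 0 := by
  rcases (zero_le : 0 ≤ (ofScalars 𝕜 c).radius).eq_or_lt with h | h
  · suffices (fun w => ∑' n, c n * w ^ n) = 0 by
      rw [this, analyticOrderAt_eq_top.mpr (by simp)]
      exact le_top
    funext w
    rcases eq_or_ne w 0 with rfl | hw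
    · rw [tsum_eq_single 0 fun n hn => by simp [hn]]
      simp [hc 0 hq]
    · refine tsum_eq_zero_of_not_summable fun hs => hw ?_
      simpa [← h] using le_radius_ofScalars_of_summable hs
  · have hS := hasFPowerSeriesAt_tsum_mul_pow h
    rw [natCast_le_analyticOrderAt_iff_iteratedDeriv_eq_zero hS.analyticAt]
    intro i hi
    simp [hS.iteratedDeriv_eq_factorial_mul, hc i hi]

end PowerSeries

section Composition

variable {𝕜 : Type*} [RCLike 𝕜] {F H : 𝕜 → 𝕜} {p : ℕ}

theorem natCast_le_analyticOrderAt_comp_add_sub (hp : 0 < p)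
    (hF : p ≤ analyticOrderAt F 0) (hH : p ≤ analyticOrderAt H 0) :
    (2 * p - 1 : ℕ) ≤ analyticOrderAt (fun w => F (w + H w) - F w) 0 := by
  obtain ⟨hFa, -⟩ := analyticOrderAt_ne_zero.mp (analyticOrderAt_ne_zero_of_natCast_le hp hF)
  obtain ⟨hHa, hH0⟩ := analyticOrderAt_ne_zero.mp (analyticOrderAt_ne_zero_of_natCast_le hp hH)
  obtain ⟨u, hu, hFu⟩ := (natCast_le_analyticOrderAt hFa).mp hF
  simp only [sub_zero, smul_eq_mul] at hFu
  have hHO : H =O[𝓝 0] (· ^ p) := by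
    simpa using (hHa.natCast_le_analyticOrderAt_iff_isBigO).mp hH
  set ν : 𝕜 → 𝕜 := fun w => w + H w with hν
  have hνa : AnalyticAt 𝕜 ν 0 := analyticAt_id.add hHa
  have hν0 : ν 0 = 0 := by simp [hν, hH0]
  have hνlim : Tendsto ν (𝓝 0) (𝓝 0) := by simpa [hν0] using hνa.continuousAt.tendsto
  have hνO : ν =O[𝓝 0] fun w => w :=
    (isBigO_refl _ _).add (hHO.trans (by simpa using isBigO_pow_pow_of_le (𝕜 := 𝕜) hp))
  have hdecomp : (fun w => F (ν w) - F w) =ᶠ[𝓝 0] fun w =>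
      ((∑ i ∈ Finset.range p, ν w ^ i * w ^ (p - 1 - i)) * H w) * u (ν w) +
        w ^ p * (u (ν w) - u w) := by
    filter_upwards [hFu, hνlim.eventually hFu] with w hw hνw
    have hH : H w = ν w - w := by simp [hν]
    rw [hνw, hw, hH, geom_sum₂_mul]
    ring
  have hsumO : (fun w => ∑ i ∈ Finset.range p, ν w ^ i * w ^ (p - 1 - i))
      =O[𝓝 0] fun w => w ^ (p - 1) := by
    refine IsBigO.fun_sum fun i hi => ?_
    refine ((hνO.pow i).mul (isBigO_refl (fun w : 𝕜 => w ^ (p - 1 - i)) _)).congr_right ?_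
    intro w
    rw [← pow_add, Nat.add_sub_cancel' (by have := Finset.mem_range.mp hi; omega)]
  obtain ⟨K, t, ht, hlip⟩ := (hu.contDiffAt (n := 1)).exists_lipschitzOnWith
  have hulip : (fun w => u (ν w) - u w) =O[𝓝 0] H := by
    refine isBigO_iff.mpr ⟨K, ?_⟩
    filter_upwards [ht, hνlim.eventually ht] with w hw hνw
    simpa [← dist_eq_norm, hν] using hlip.dist_le_mul _ hνw _ hw
  have h1 : (fun w => ((∑ i ∈ Finset.range p, ν w ^ i * w ^ (p - 1 - i)) * H w) * u (ν w))
      =O[𝓝 0] fun w => w ^ (2 * p - 1) := by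
    have huν := (hu.continuousAt.tendsto.comp hνlim).isBigO_one 𝕜
    refine ((hsumO.mul hHO).mul huν).congr_right ?_
    intro w
    rw [mul_one, ← pow_add]
    congr 1
    omega
  have h2 : (fun w => w ^ p * (u (ν w) - u w)) =O[𝓝 0] fun w => w ^ (2 * p - 1) := by
    refine (((isBigO_refl _ _).mul (hulip.trans hHO)).congr_right ?_).trans
      (isBigO_pow_pow_of_le (by omega : 2 * p - 1 ≤ 2 * p))
    intro w
    rw [← pow_add, two_mul]
  have hG : AnalyticAt 𝕜 (fun w => F (ν w) - F w) 0 := (hFa.comp_of_eq hνa hν0).sub hFa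
  rw [hG.natCast_le_analyticOrderAt_iff_isBigO]
  simpa using hdecomp.trans_isBigO (h1.add h2)

theorem natCast_le_analyticOrderAt_remainder {A B : 𝕜 → 𝕜} (hp : 0 < p)
    (hA : p ≤ analyticOrderAt A 0) (hB : p ≤ analyticOrderAt B 0)
    (hH : p ≤ analyticOrderAt H 0) :
    (2 * p - 1 : ℕ) ≤ analyticOrderAt (fun w => A (w + H w) - A w - B (w + H w) + B w) 0 := by
  have hAB := (le_min hA hB).trans le_analyticOrderAt_sub
  convert natCast_le_analyticOrderAt_comp_add_sub hp hAB hH using 2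
  funext w
  simp only [Pi.sub_apply]
  ring

theorem analyticOrderAt_le_analyticOrderAt_inv_one_add_deriv_mul {g : 𝕜 → 𝕜}
    (hH : 2 ≤ analyticOrderAt H 0) :
    analyticOrderAt g 0 ≤ analyticOrderAt (fun w => (1 + deriv H w)⁻¹ * g w) 0 := by
  have hH' : ((2 : ℕ) : ℕ∞) ≤ analyticOrderAt H 0 := hH
  have hHa := (analyticOrderAt_ne_zero.mp (analyticOrderAt_ne_zero_of_natCast_le two_pos hH')).1
  have hdH : deriv H 0 = 0 := by
    simpa using iteratedDeriv_eq_zero_of_natCast_le_analyticOrderAt hH' 1 one_lt_two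
  exact analyticOrderAt_le_analyticOrderAt_mul
    ((analyticAt_const.add hHa.deriv).inv (by simp [hdH]))

end Composition

theorem Complex.dense_setOf_im_ne_zero : Dense {z : ℂ | z.im ≠ 0} := by
  rw [dense_iff_closure_eq, show {z : ℂ | z.im ≠ 0} = im ⁻¹' {0}ᶜ from rfl,
    closure_preimage_im, (dense_compl_singleton (0 : ℝ)).closure_eq, preimage_univ]

theorem eqOn_zero_of_offCut {g : ℂ → ℂ} {U : Set ℂ} (hU : IsOpen U) (hg : ContinuousOn g U)
    (h : ∀ z ∈ U, OffCut z → g z = 0) : EqOn g 0 U :=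
  EqOn.of_subset_closure (fun z hz => h z hz.1 (Or.inl hz.2)) hg continuousOn_const
    inter_subset_left (dense_setOf_im_ne_zero.open_subset_closure_inter hU)

@[simp]
theorem PhiOp_zero (a b ν : ℂ) : PhiOp a b ν 0 = 0 := by
  simp [PhiOp]

@[simp]
theorem JOp_zero (a b ν z : ℂ) : JOp a b ν 0 z = 0 := by
  simp [JOp]

section Setting

variable {a b c : ℂ} {ρ R : ℝ} {f : ℂ → ℂ → ℂ} {fc hJ : ℕ → ℂ → ℂ}
  {p : ℕ}

theorem natCast_le_analyticOrderAt_PhiFun (hp : 0 < p) (hord : ∀ n < p, fc n = 0) :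
    p ≤ analyticOrderAt (PhiFun a b fc) 0 :=
  natCast_le_analyticOrderAt_tsum_mul_pow hp fun n hn => by simp [hord n hn]

theorem JExt.natCast_le_analyticOrderAt_hFun (hJe : JExt a b c ρ fc hJ) (hp : 0 < p)
    (hord : ∀ n < p, fc n = 0) {x : ℂ} (hx : x ∈ ball c ρ) :
    p ≤ analyticOrderAt (hFun hJ x) 0 := by
  refine natCast_le_analyticOrderAt_tsum_mul_pow hp fun n hn => ?_
  rcases lt_or_ge n 2 with hn2 | hn2
  · simp [hJe.1 n hn2]
  · obtain ⟨hdiff, hform⟩ := hJe.2 n hn2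
    exact eqOn_zero_of_offCut isOpen_ball hdiff.continuousOn
      (fun z hz hoff => by simp [hform z hz hoff, hord n hn]) hx

theorem PiSetup.natCast_le_analyticOrderAt (hPi : PiSetup c ρ R f fc) (hR : 0 < R) (hp : 0 < p)
    {x : ℂ} (hx : x ∈ ball c ρ) (hord : ∀ n < p, fc n x = 0) :
    p ≤ analyticOrderAt (f x) 0 := by
  have hf : f x =ᶠ[𝓝 0] fun w => ∑' n, fc n x * w ^ n := by
    filter_upwards [ball_mem_nhds 0 hR] with w hw using (hPi.2.2.2.2 x hx w hw).tsum_eq.symm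
  rw [analyticOrderAt_congr hf]
  exact natCast_le_analyticOrderAt_tsum_mul_pow hp hord

end Setting

theorem stmt17_general (a b c : ℂ)
    (ρ : ℝ) (R : ℝ) (hR : 0 < R) (δ : ℝ) (hδ : δ ∈ Ioo (0 : ℝ) (1 / 2))
    (f : ℂ → ℂ → ℂ) (fc hJ : ℕ → ℂ → ℂ)
    (hPi : PiSetup c ρ R f fc) (hJe : JExt a b c ρ fc hJ)
    (p : ℕ) (hp2 : 2 ≤ p) (hord : ∀ n < p, fc n = 0) :
    (∀ k < p, iteratedDeriv k (PhiFun a b fc) 0 = 0) ∧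
    (∀ x ∈ Metric.ball c ρ, ∀ k < p, iteratedDeriv k (hFun hJ x) 0 = 0) ∧
    (∀ x ∈ Metric.ball c (ρ * Real.exp (-δ)), ∀ k < 2 * p - 1,
      iteratedDeriv k (fun w =>
        f x (w + hFun hJ x w) - f x w -
          PhiFun a b fc (w + hFun hJ x w) + PhiFun a b fc w) 0 = 0) ∧
    (∀ x ∈ Metric.ball c (ρ * Real.exp (-δ)), ∀ k < 2 * p - 1,
      iteratedDeriv k (fun w =>
        (1 + deriv (hFun hJ x) w)⁻¹ *
          (f x (w + hFun hJ x w) - f x w -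
            PhiFun a b fc (w + hFun hJ x w) + PhiFun a b fc w)) 0 = 0) := by
  have hp : 0 < p := by omega
  have hball : ball c (ρ * Real.exp (-δ)) ⊆ ball c ρ := fun x hx => by
    have hρ : 0 < ρ := (mul_pos_iff_of_pos_right (Real.exp_pos _)).mp (dist_nonneg.trans_lt hx)
    exact ball_subset_ball (mul_le_of_le_one_right hρ.le
      (Real.exp_le_one_iff.mpr (by linarith [hδ.1]))) hx
  have hΦ : p ≤ analyticOrderAt (PhiFun a b fc) 0 := natCast_le_analyticOrderAt_PhiFun hp hord
  have hh : ∀ x ∈ ball c ρ, p ≤ analyticOrderAt (hFun hJ x) 0 := fun x hx =>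
    hJe.natCast_le_analyticOrderAt_hFun hp hord hx
  have hR₀ : ∀ x ∈ ball c ρ, (2 * p - 1 : ℕ) ≤ analyticOrderAt (fun w =>
      f x (w + hFun hJ x w) - f x w - PhiFun a b fc (w + hFun hJ x w) + PhiFun a b fc w) 0 :=
    fun x hx => natCast_le_analyticOrderAt_remainder hp
      (hPi.natCast_le_analyticOrderAt hR hp hx fun n hn => congrFun (hord n hn) x) hΦ (hh x hx)
  refine ⟨iteratedDeriv_eq_zero_of_natCast_le_analyticOrderAt hΦ,
    fun x hx => iteratedDeriv_eq_zero_of_natCast_le_analyticOrderAt (hh x hx),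
    fun x hx => iteratedDeriv_eq_zero_of_natCast_le_analyticOrderAt (hR₀ x (hball hx)),
    fun x hx => iteratedDeriv_eq_zero_of_natCast_le_analyticOrderAt ?_⟩
  exact (hR₀ x (hball hx)).trans (analyticOrderAt_le_analyticOrderAt_inv_one_add_deriv_mul
    ((Nat.cast_le.mpr hp2).trans (hh x (hball hx))))

/-- if `f ∈ Π` has a zero of order `p ≥ 2` at `w = 0` (`f_n ≡ 0` for `n < p`),
then `Φ[f]` and `h(x,·)` have zeros of order `≥ p` at `w = 0`, and — under the hypotheses
guaranteeing that the compositions are defined on `Δ_δ` — the remainder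
`R₀[f](x,w) = f(x,w+h) - f(x,w) - Φ[f](w+h) + Φ[f](w)`, and hence also
`R[f] = (1+∂_w h)⁻¹ R₀[f]`, has a zero of order `≥ 2p-1` at `w = 0`
(zeros of order `≥ q` being expressed by vanishing of the iterated derivatives of order `< q`). -/
theorem stmt17 (a b c : ℂ) (ha : 0 < a.re) (hb : 0 < b.re) (hc : c = (b - a) / (a + b))
    (ρmin ρ0 : ℝ) (hρmin : 0 < ρmin)
    (hm : (-1 : ℂ) ∈ Metric.ball c ρmin) (hp : (1 : ℂ) ∈ Metric.ball c ρmin)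
    (hρ0 : ρmin < ρ0)
    (ρ : ℝ) (hρ : ρ ∈ Icc ρmin ρ0) (R : ℝ) (hR : 0 < R) (δ : ℝ) (hδ : δ ∈ Ioo (0 : ℝ) (1 / 2))
    (f : ℂ → ℂ → ℂ) (fc hJ : ℕ → ℂ → ℂ)
    (hPi : PiSetup c ρ R f fc) (hJe : JExt a b c ρ fc hJ)
    (p : ℕ) (hp2 : 2 ≤ p) (hord : ∀ n < p, fc n = 0)
    -- hypotheses guaranteeing that the compositions are defined on `Δ_δ`:
    (hcomp : ∀ x ∈ Metric.ball c (ρ * Real.exp (-δ)), ∀ w : ℂ, ‖w‖ < R * Real.exp (-δ) →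
      ‖w + hFun hJ x w‖ ≤ R * Real.exp (-(δ / 2)))
    (hder : ∀ x ∈ Metric.ball c (ρ * Real.exp (-δ)), ∀ w : ℂ, ‖w‖ < R * Real.exp (-δ) →
      ‖deriv (hFun hJ x) w‖ < 1) :
    (∀ k < p, iteratedDeriv k (PhiFun a b fc) 0 = 0) ∧
    (∀ x ∈ Metric.ball c ρ, ∀ k < p, iteratedDeriv k (hFun hJ x) 0 = 0) ∧
    (∀ x ∈ Metric.ball c (ρ * Real.exp (-δ)), ∀ k < 2 * p - 1,
      iteratedDeriv k (fun w =>
        f x (w + hFun hJ x w) - f x w -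
          PhiFun a b fc (w + hFun hJ x w) + PhiFun a b fc w) 0 = 0) ∧
    (∀ x ∈ Metric.ball c (ρ * Real.exp (-δ)), ∀ k < 2 * p - 1,
      iteratedDeriv k (fun w =>
        (1 + deriv (hFun hJ x) w)⁻¹ *
          (f x (w + hFun hJ x w) - f x w -
            PhiFun a b fc (w + hFun hJ x w) + PhiFun a b fc w)) 0 = 0) :=
  stmt17_general a b c ρ R hR δ hδ f fc hJ hPi hJe p hp2 hord
end
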